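/- For r ∈ (0,1), the integral of x^2 · f_K(x;r) over ℝ equals 1 - sqrt(1-r^2). -/

import Mathlib

/-!
With `s = √(1 - r²)` and `x² / (1 - x²) = 1 / (1 - x²) - 1`, the integrand `x² f_K(x; r)` on
`(-r, r)` is `(s / ((1 - x²) √(r² - x²)) - s / √(r² - x²)) / π`. Both terms have arcsine
primitives, `arcsin (s x / (r √(1 - x²)))` and `s · arcsin (x / r)`, whose arguments reach `±1`
exactly at `x = ±r`. Hence the integral is `(π - s π) / π = 1 - s`.
-/

open Real MeasureTheory

/-- The Konno density function `f_K(x;r)`. -/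
noncomputable def konnoDensity (r x : ℝ) : ℝ :=
  if x ∈ Set.Ioo (-r) r then Real.sqrt (1 - r ^ 2) / (π * (1 - x ^ 2) * Real.sqrt (r ^ 2 - x ^ 2))
  else 0

open Set

theorem integral_Ioo_eq_sub_of_hasDerivAt_of_nonneg {f f' : ℝ → ℝ} {a b : ℝ} (hab : a ≤ b)
    (hcont : ContinuousOn f (Icc a b)) (hderiv : ∀ x ∈ Ioo a b, HasDerivAt f (f' x) x)
    (hpos : ∀ x ∈ Ioo a b, 0 ≤ f' x) :
    ∫ x in Ioo a b, f' x = f b - f a := by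
  rw [← integral_Ioc_eq_integral_Ioo, ← intervalIntegral.integral_of_le hab]
  exact intervalIntegral.integral_eq_sub_of_hasDerivAt_of_le hab hcont hderiv
    ((intervalIntegrable_iff_integrableOn_Ioc_of_le hab).2
      (intervalIntegral.integrableOn_deriv_of_nonneg hcont hderiv hpos))

theorem HasDerivAt.arcsin {f : ℝ → ℝ} {f' x : ℝ} (hf : HasDerivAt f f' x)
    (hx : f x ^ 2 < 1) : HasDerivAt (fun y => arcsin (f y)) (f' / √(1 - f x ^ 2)) x := by
  have h := (hasDerivAt_arcsin (x := f x) (by nlinarith) (by nlinarith)).comp x hf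
  rw [one_div_mul_eq_div] at h
  exact h

theorem hasDerivAt_arcsin_div {r x : ℝ} (hx : x ∈ Ioo (-r) r) :
    HasDerivAt (fun y => arcsin (y / r)) (1 / √(r ^ 2 - x ^ 2)) x := by
  have hr : 0 < r := by linarith [hx.1, hx.2]
  have hxr : (x / r) ^ 2 < 1 := by
    rw [div_pow, div_lt_one (by positivity)]
    exact sq_lt_sq' hx.1 hx.2
  have hsqrt : √(1 - (x / r) ^ 2) = √(r ^ 2 - x ^ 2) / r := by
    rw [show 1 - (x / r) ^ 2 = (r ^ 2 - x ^ 2) / r ^ 2 by field_simp,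
      sqrt_div' _ (sq_nonneg r), sqrt_sq hr.le]
  convert ((hasDerivAt_id' x).div_const r).arcsin hxr using 1
  rw [hsqrt]
  field_simp

theorem hasDerivAt_arcsin_mul_div_sqrt_one_sub_sq {c x : ℝ} (hx : (1 + c ^ 2) * x ^ 2 < 1) :
    HasDerivAt (fun y => arcsin (c * y / √(1 - y ^ 2)))
      (c / ((1 - x ^ 2) * √(1 - (1 + c ^ 2) * x ^ 2))) x := by
  have hx1 : 0 < 1 - x ^ 2 := by nlinarith [sq_nonneg (c * x)]
  have hw : 0 < √(1 - x ^ 2) := sqrt_pos.2 hx1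
  have hw2 : √(1 - x ^ 2) ^ 2 = 1 - x ^ 2 := sq_sqrt hx1.le
  have hv : (c * x / √(1 - x ^ 2)) ^ 2 < 1 := by
    rw [div_pow, div_lt_one (by positivity), hw2]
    linarith
  have hsqrt : √(1 - (c * x / √(1 - x ^ 2)) ^ 2) = √(1 - (1 + c ^ 2) * x ^ 2) / √(1 - x ^ 2) := by
    rw [← sqrt_div' _ hx1.le, div_pow, hw2]
    congr 1
    field_simp
    ring
  have hw' : HasDerivAt (fun y => √(1 - y ^ 2)) (-x / √(1 - x ^ 2)) x := by
    convert ((hasDerivAt_pow 2 x).const_sub 1).sqrt hx1.ne' using 1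
    field_simp
    ring
  have hquot : HasDerivAt (fun y => c * y / √(1 - y ^ 2))
      ((c * 1 * √(1 - x ^ 2) - c * x * (-x / √(1 - x ^ 2))) / √(1 - x ^ 2) ^ 2) x :=
    ((hasDerivAt_id' x).const_mul c).div hw' hw.ne'
  convert hquot.arcsin hv using 1
  rw [hsqrt]
  field_simp
  rw [hw2]
  ring

theorem konnoDensity_nonneg (r x : ℝ) : 0 ≤ konnoDensity r x := by
  unfold konnoDensity
  split_ifs with hx
  · rcases le_or_gt (r ^ 2) 1 with hr | hr
    · have hx1 : x ^ 2 < 1 := by nlinarith [sq_lt_sq' hx.1 hx.2]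
      positivity
    · rw [sqrt_eq_zero_of_nonpos (by linarith), zero_div]
  · exact le_rfl

noncomputable def konnoSecondMomentPrimitive (r x : ℝ) : ℝ :=
  (arcsin (√(1 - r ^ 2) / r * x / √(1 - x ^ 2)) - √(1 - r ^ 2) * arcsin (x / r)) / π

theorem hasDerivAt_konnoSecondMomentPrimitive {r x : ℝ} (hr1 : r < 1) (hx : x ∈ Ioo (-r) r) :
    HasDerivAt (konnoSecondMomentPrimitive r) (x ^ 2 * konnoDensity r x) x := by
  have hr0 : 0 < r := by linarith [hx.1, hx.2]
  have hxr : x ^ 2 < r ^ 2 := sq_lt_sq' hx.1 hx.2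
  have hs2 : √(1 - r ^ 2) ^ 2 = 1 - r ^ 2 := sq_sqrt (by nlinarith)
  have hc : 1 + (√(1 - r ^ 2) / r) ^ 2 = 1 / r ^ 2 := by
    field_simp
    rw [hs2]
    ring
  have hsqrt : √(1 - (1 + (√(1 - r ^ 2) / r) ^ 2) * x ^ 2) = √(r ^ 2 - x ^ 2) / r := by
    rw [hc, show 1 - 1 / r ^ 2 * x ^ 2 = (r ^ 2 - x ^ 2) / r ^ 2 by field_simp,
      sqrt_div' _ (sq_nonneg r), sqrt_sq hr0.le]
  have hmem : (1 + (√(1 - r ^ 2) / r) ^ 2) * x ^ 2 < 1 := by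
    rw [hc, one_div_mul_eq_div, div_lt_one (by positivity)]
    exact hxr
  refine (((hasDerivAt_arcsin_mul_div_sqrt_one_sub_sq hmem).sub
    ((hasDerivAt_arcsin_div hx).const_mul (√(1 - r ^ 2)))).div_const π).congr_deriv ?_
  have hx1 : 0 < 1 - x ^ 2 := by nlinarith
  have hq : 0 < √(r ^ 2 - x ^ 2) := sqrt_pos.2 (by linarith)
  rw [hsqrt, konnoDensity, if_pos hx]
  field_simp
  ring

theorem continuousOn_konnoSecondMomentPrimitive {r : ℝ} (hr1 : r < 1) :
    ContinuousOn (konnoSecondMomentPrimitive r) (Icc (-r) r) := by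
  have hx1 : ∀ x ∈ Icc (-r) r, √(1 - x ^ 2) ≠ 0 := fun x hx => by
    have hxr : x ^ 2 ≤ r ^ 2 := sq_le_sq' hx.1 hx.2
    have hr : r ^ 2 < 1 := by nlinarith [hx.1.trans hx.2]
    exact (sqrt_pos.2 (by linarith)).ne'
  unfold konnoSecondMomentPrimitive
  fun_prop (disch := assumption)

theorem konnoSecondMomentPrimitive_neg (r x : ℝ) :
    konnoSecondMomentPrimitive r (-x) = -konnoSecondMomentPrimitive r x := by
  simp only [konnoSecondMomentPrimitive, neg_sq, mul_neg, neg_div, arcsin_neg]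
  ring

theorem konnoSecondMomentPrimitive_self {r : ℝ} (hr0 : 0 < r) (hr1 : r < 1) :
    konnoSecondMomentPrimitive r r = (1 - √(1 - r ^ 2)) / 2 := by
  have hs : 0 < √(1 - r ^ 2) := sqrt_pos.2 (by nlinarith)
  rw [konnoSecondMomentPrimitive, div_mul_cancel₀ _ hr0.ne', div_self hs.ne', div_self hr0.ne',
    arcsin_one]
  field_simp

theorem konnoDensity_second_moment (r : ℝ) (hr0 : 0 < r) (hr1 : r < 1) :
    ∫ x : ℝ, x ^ 2 * konnoDensity r x = 1 - Real.sqrt (1 - r ^ 2) := by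
  have hsupp : ∀ x ∉ Ioo (-r) r, x ^ 2 * konnoDensity r x = 0 := fun x hx => by
    rw [konnoDensity, if_neg hx, mul_zero]
  rw [← setIntegral_eq_integral_of_forall_compl_eq_zero hsupp,
    integral_Ioo_eq_sub_of_hasDerivAt_of_nonneg (by linarith)
      (continuousOn_konnoSecondMomentPrimitive hr1)
      (fun x hx => hasDerivAt_konnoSecondMomentPrimitive hr1 hx)
      (fun x _ => mul_nonneg (sq_nonneg x) (konnoDensity_nonneg r x)),
    konnoSecondMomentPrimitive_neg, konnoSecondMomentPrimitive_self hr0 hr1]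
  ring
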